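/- Let φ : ℝ^{n×s} → ℝ^N with J(A) = ‖φ(A)‖₁ and ξ_r < 1/2 its r-th concentration ratio. If there exists à with ‖φ(Ã)‖₀ ≤ r, then the set of global minimizers of J equals {A : ‖φ(A)‖₀ ≤ r} and also equals {A : φ(A) = φ(Ã)}. -/

import Mathlib

/-!
If `Ã` is `r`-sparse and `B` has `φ B ≠ φ Ã`, the support `T` of `φ Ã` carries less than half
of the ℓ¹ distance `d = ‖φ Ã - φ B‖₁`, because `ξ_r < 1/2`. Comparing coordinatewise on `T`
and off `T` gives `J Ã + d ≤ J B + 2 ∑_{t ∈ T} |φ Ã t - φ B t| < J B + d`, so `Ã` beats every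
`B` with a different image. Hence the minimizers are exactly the `A` with `φ A = φ Ã`, and two
sparse points must share their image, since each would strictly beat the other.
-/

open Finset

/-- The `r`-th concentration ratio of a map `φ : ℝ^{n×s} → ℝ^N`. -/
noncomputable def xi {n s N : ℕ} (φ : Matrix (Fin n) (Fin s) ℝ → (Fin N → ℝ)) (r : ℕ) : ℝ :=
  sSup {c : ℝ | ∃ A A' : Matrix (Fin n) (Fin s) ℝ, ∃ T : Finset (Fin N),
    φ A ≠ φ A' ∧ T.card ≤ r ∧
    c = (∑ t ∈ T, |φ A t - φ A' t|) / (∑ t, |φ A t - φ A' t|)}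

/-- The cost `J(A) = ‖φ(A)‖₁`. -/
noncomputable def Jcost {n s N : ℕ} (φ : Matrix (Fin n) (Fin s) ℝ → (Fin N → ℝ))
    (A : Matrix (Fin n) (Fin s) ℝ) : ℝ :=
  ∑ t, |φ A t|

/-- `δ_r(A)`: the ℓ¹ distance from `φ(A)` to the set of `r`-sparse vectors. -/
noncomputable def deltaR {n s N : ℕ} (φ : Matrix (Fin n) (Fin s) ℝ → (Fin N → ℝ))
    (r : ℕ) (A : Matrix (Fin n) (Fin s) ℝ) : ℝ :=
  sInf {c : ℝ | ∃ w : Fin N → ℝ,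
    (Finset.univ.filter (fun t => w t ≠ 0)).card ≤ r ∧ c = ∑ t, |φ A t - w t|}

section L1

variable {ι : Type*} [Fintype ι]

lemma sum_abs_sub_pos {x y : ι → ℝ} (h : x ≠ y) : 0 < ∑ t, |x t - y t| := by
  obtain ⟨t, ht⟩ := Function.ne_iff.1 h
  exact sum_pos' (fun _ _ => abs_nonneg _) ⟨t, mem_univ t, abs_pos.2 (sub_ne_zero.2 ht)⟩

lemma sum_abs_add_sum_abs_sub_le [DecidableEq ι] {x y : ι → ℝ} {T : Finset ι}
    (hx : ∀ t ∉ T, x t = 0) :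
    ∑ t, |x t| + ∑ t, |x t - y t| ≤ ∑ t, |y t| + 2 * ∑ t ∈ T, |x t - y t| := by
  have hpoint : ∀ t, |x t| + |x t - y t| ≤ |y t| + 2 * (if t ∈ T then |x t - y t| else 0) := by
    intro t
    by_cases ht : t ∈ T
    · simp only [ht, if_true]
      linarith [abs_sub_abs_le_abs_sub (x t) (y t)]
    · simp [ht, hx t ht]
  calc ∑ t, |x t| + ∑ t, |x t - y t|
      ≤ ∑ t, (|y t| + 2 * (if t ∈ T then |x t - y t| else 0)) := by
        rw [← sum_add_distrib]
        exact sum_le_sum fun t _ => hpoint t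
    _ = ∑ t, |y t| + 2 * ∑ t ∈ T, |x t - y t| := by
        rw [sum_add_distrib, ← mul_sum, sum_ite_mem, univ_inter]

end L1

section Concentration

variable {n s N : ℕ} {φ : Matrix (Fin n) (Fin s) ℝ → (Fin N → ℝ)} {r : ℕ}

lemma sum_abs_sub_le_xi_mul (A A' : Matrix (Fin n) (Fin s) ℝ) {T : Finset (Fin N)}
    (hT : T.card ≤ r) :
    ∑ t ∈ T, |φ A t - φ A' t| ≤ xi φ r * ∑ t, |φ A t - φ A' t| := by
  by_cases h : φ A = φ A'
  · simp [h]
  have hd := sum_abs_sub_pos h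
  have hbdd : BddAbove {c : ℝ | ∃ A A' : Matrix (Fin n) (Fin s) ℝ, ∃ T : Finset (Fin N),
      φ A ≠ φ A' ∧ T.card ≤ r ∧
      c = (∑ t ∈ T, |φ A t - φ A' t|) / (∑ t, |φ A t - φ A' t|)} := by
    refine ⟨1, ?_⟩
    rintro _ ⟨B, B', U, hBB', -, rfl⟩
    rw [div_le_one (sum_abs_sub_pos hBB')]
    exact sum_le_sum_of_subset_of_nonneg (subset_univ U) fun _ _ _ => abs_nonneg _
  exact (div_le_iff₀ hd).1 (le_csSup hbdd ⟨A, A', T, h, hT, rfl⟩)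

lemma Jcost_lt_of_sparse (hxi : xi φ r < 1 / 2) {A B : Matrix (Fin n) (Fin s) ℝ}
    (hA : (univ.filter fun t => φ A t ≠ 0).card ≤ r) (hB : φ A ≠ φ B) :
    Jcost φ A < Jcost φ B := by
  set T := univ.filter fun t => φ A t ≠ 0
  have hd := sum_abs_sub_pos hB
  have hconc : ∑ t ∈ T, |φ A t - φ B t| < 1 / 2 * ∑ t, |φ A t - φ B t| :=
    (sum_abs_sub_le_xi_mul A B hA).trans_lt (mul_lt_mul_of_pos_right hxi hd)
  have hl1 := sum_abs_add_sum_abs_sub_le (y := φ B) (T := T) fun t ht => by simpa [T] using ht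
  unfold Jcost
  linarith

lemma setOf_isMinimizer_eq (hxi : xi φ r < 1 / 2) {Atil : Matrix (Fin n) (Fin s) ℝ}
    (hAtil : (univ.filter fun t => φ Atil t ≠ 0).card ≤ r) :
    {A | ∀ B, Jcost φ A ≤ Jcost φ B} = {A | φ A = φ Atil} := by
  ext A
  constructor
  · intro hA
    by_contra hne
    exact (hA Atil).not_gt (Jcost_lt_of_sparse hxi hAtil (Ne.symm hne))
  · intro (hA : φ A = φ Atil) B
    have hJ : Jcost φ A = Jcost φ Atil := by simp only [Jcost, hA]
    rw [hJ]
    by_cases hB : φ Atil = φ B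
    · simp only [Jcost, hB, le_refl]
    · exact (Jcost_lt_of_sparse hxi hAtil hB).le

lemma setOf_sparse_eq (hxi : xi φ r < 1 / 2) {Atil : Matrix (Fin n) (Fin s) ℝ}
    (hAtil : (univ.filter fun t => φ Atil t ≠ 0).card ≤ r) :
    {A | (univ.filter fun t => φ A t ≠ 0).card ≤ r} = {A | φ A = φ Atil} := by
  ext A
  constructor
  · intro (hA : (univ.filter fun t => φ A t ≠ 0).card ≤ r)
    by_contra hne
    exact (Jcost_lt_of_sparse hxi hA hne).not_gt (Jcost_lt_of_sparse hxi hAtil (Ne.symm hne))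
  · intro (hA : φ A = φ Atil)
    simpa only [Set.mem_ofPred_eq, hA] using hAtil

end Concentration

/-- If `ξ_r < 1/2` and some `Ã` satisfies `‖φ(Ã)‖₀ ≤ r`, then the set of global
minimizers of `J` equals `{A : ‖φ(A)‖₀ ≤ r}` and equals `{A : φ(A) = φ(Ã)}`. -/
theorem stmt_7 {n s N : ℕ} (φ : Matrix (Fin n) (Fin s) ℝ → (Fin N → ℝ))
    (r : ℕ) (hxi : xi φ r < 1 / 2)
    (Atil : Matrix (Fin n) (Fin s) ℝ)
    (hAtil : (Finset.univ.filter (fun t => φ Atil t ≠ 0)).card ≤ r) :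
    {A : Matrix (Fin n) (Fin s) ℝ | ∀ B, Jcost φ A ≤ Jcost φ B}
        = {A | (Finset.univ.filter (fun t => φ A t ≠ 0)).card ≤ r} ∧
      {A : Matrix (Fin n) (Fin s) ℝ | ∀ B, Jcost φ A ≤ Jcost φ B}
        = {A | φ A = φ Atil} := by
  have hmin := setOf_isMinimizer_eq hxi hAtil
  exact ⟨hmin.trans (setOf_sparse_eq hxi hAtil).symm, hmin⟩
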